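/- arXiv:2302.11246 — 5 statements merged into one kernel-verified Lean document; each statement's English description precedes it below -/
import Mathlib

section
/- For a rectangular region A = [-a/2, a/2] × [-b/2, b/2] with a, b > 0 and D = √(a² + b²), the mean distance to the center satisfies (1/(ab)) ∫_A ‖q‖ dA = (a²/(12b)) · log((D + b)/a) − (b²/(12a)) · log((D − a)/b) + D/6. -/
open MeasureTheory

open Real Set

/-!
By Fubini, the mean is an iterated integral. For `x ≠ 0` the inner integral
`∫_{-c}^{c} √(x² + y²) dy` equals `c s + x² log ((c + s) / |x|)` with `s = √(x² + c²)`, and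
`x ≠ 0` holds almost everywhere. This closed form is continuous and has an elementary
primitive that is differentiable off `0` and continuous at `0`, so the fundamental theorem of
calculus with a countable exceptional set evaluates the outer integral. The primitive is
evaluated at `x = ±a/2`, where `s = D/2`, and `(D + a)(D - a) = b²` turns the result
into the stated form.
-/

lemma abs_lt_sqrt_sq_add_sq {x : ℝ} (hx : x ≠ 0) (y : ℝ) : |y| < √(x ^ 2 + y ^ 2) := by
  rw [← sqrt_sq_eq_abs]
  exact sqrt_lt_sqrt (sq_nonneg y) (by simpa using pow_pos (abs_pos.2 hx) 2)

lemma hasDerivAt_sqrt_sq_add_sq_primitive {x : ℝ} (hx : x ≠ 0) (y : ℝ) :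
    HasDerivAt (fun y ↦ y * √(x ^ 2 + y ^ 2) / 2 + x ^ 2 / 2 * log (y + √(x ^ 2 + y ^ 2)))
      √(x ^ 2 + y ^ 2) y := by
  have hyr : 0 < y + √(x ^ 2 + y ^ 2) := by
    linarith [neg_abs_le y, abs_lt_sqrt_sq_add_sq hx y]
  have hsq : √(x ^ 2 + y ^ 2) ^ 2 = x ^ 2 + y ^ 2 := sq_sqrt (by positivity)
  have hr : HasDerivAt (fun y ↦ √(x ^ 2 + y ^ 2)) (2 * y / (2 * √(x ^ 2 + y ^ 2))) y := by
    simpa using ((hasDerivAt_pow 2 y).const_add (x ^ 2)).sqrt (by positivity)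
  refine ((((hasDerivAt_id' y).mul hr).div_const 2).add
    ((((hasDerivAt_id' y).add hr).log hyr.ne').const_mul (x ^ 2 / 2))).congr_deriv ?_
  have : √(x ^ 2 + y ^ 2) ≠ 0 := by positivity
  simp only [Pi.add_apply]
  field_simp
  linear_combination (-(y + √(x ^ 2 + y ^ 2))) * hsq

/-- Here `log x` stands for `log |x|` (`Real.log_abs`), so negative `x` are covered. -/
noncomputable def segmentIntegral (c x : ℝ) : ℝ :=
  c * √(x ^ 2 + c ^ 2) + x ^ 2 * (log (c + √(x ^ 2 + c ^ 2)) - log x)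

lemma log_neg_add_sqrt_sq_add_sq {x : ℝ} (hx : x ≠ 0) (c : ℝ) :
    log (-c + √(x ^ 2 + c ^ 2)) = 2 * log x - log (c + √(x ^ 2 + c ^ 2)) := by
  have hc := abs_lt_sqrt_sq_add_sq hx c
  have h₁ : 0 < -c + √(x ^ 2 + c ^ 2) := by linarith [le_abs_self c]
  have h₂ : 0 < c + √(x ^ 2 + c ^ 2) := by linarith [neg_abs_le c]
  have hprod : (-c + √(x ^ 2 + c ^ 2)) * (c + √(x ^ 2 + c ^ 2)) = x ^ 2 := by
    linear_combination sq_sqrt (by positivity : 0 ≤ x ^ 2 + c ^ 2)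
  rw [eq_sub_iff_add_eq, ← log_mul h₁.ne' h₂.ne', hprod, log_pow]
  norm_num

lemma integral_sqrt_sq_add_sq {x : ℝ} (hx : x ≠ 0) (c : ℝ) :
    ∫ y in -c..c, √(x ^ 2 + y ^ 2) = segmentIntegral c x := by
  rw [intervalIntegral.integral_eq_sub_of_hasDerivAt
    (fun y _ ↦ hasDerivAt_sqrt_sq_add_sq_primitive hx y)
    ((by fun_prop : Continuous _).intervalIntegrable _ _),
    neg_sq, log_neg_add_sqrt_sq_add_sq hx, segmentIntegral]
  ring

noncomputable def segmentIntegralPrimitive (c x : ℝ) : ℝ :=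
  2 / 3 * c * x * √(x ^ 2 + c ^ 2) + c ^ 3 / 3 * log (x + √(x ^ 2 + c ^ 2))
    + x ^ 3 / 3 * (log (c + √(x ^ 2 + c ^ 2)) - log x)

lemma hasDerivAt_segmentIntegralPrimitive {c x : ℝ} (hc : c ≠ 0) (hx : x ≠ 0) :
    HasDerivAt (segmentIntegralPrimitive c) (segmentIntegral c x) x := by
  have hxs : 0 < x + √(x ^ 2 + c ^ 2) := by
    linarith [neg_abs_le x, add_comm (x ^ 2) (c ^ 2) ▸ abs_lt_sqrt_sq_add_sq hc x]
  have hcs : 0 < c + √(x ^ 2 + c ^ 2) := by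
    linarith [neg_abs_le c, abs_lt_sqrt_sq_add_sq hx c]
  have hsq : √(x ^ 2 + c ^ 2) ^ 2 = x ^ 2 + c ^ 2 := sq_sqrt (by positivity)
  have hs : HasDerivAt (fun x ↦ √(x ^ 2 + c ^ 2)) (2 * x / (2 * √(x ^ 2 + c ^ 2))) x := by
    simpa using ((hasDerivAt_pow 2 x).add_const (c ^ 2)).sqrt (by positivity)
  refine (((((hasDerivAt_id' x).const_mul (2 / 3 * c)).mul hs).add
    ((((hasDerivAt_id' x).add hs).log hxs.ne').const_mul (c ^ 3 / 3))).add
    (((hasDerivAt_pow 3 x).div_const 3).mul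
      (((hs.const_add c).log hcs.ne').sub (hasDerivAt_log hx)))).congr_deriv ?_
  have : √(x ^ 2 + c ^ 2) ≠ 0 := by positivity
  simp only [Pi.add_apply, Pi.sub_apply, segmentIntegral]
  field_simp
  linear_combination -(x + √(x ^ 2 + c ^ 2)) * (c ^ 2 + c * √(x ^ 2 + c ^ 2) + x ^ 2) * hsq

lemma continuous_log_add_sqrt_sq_add_sq {c : ℝ} (hc : 0 < c) :
    Continuous fun x ↦ log (c + √(x ^ 2 + c ^ 2)) :=
  (by fun_prop : Continuous _).log fun x ↦ by positivity

lemma continuous_segmentIntegral {c : ℝ} (hc : 0 < c) : Continuous (segmentIntegral c) := by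
  have h : segmentIntegral c = fun x ↦
      c * √(x ^ 2 + c ^ 2) + x ^ 2 * log (c + √(x ^ 2 + c ^ 2)) - x * (x * log x) := by
    ext x; rw [segmentIntegral]; ring
  -- `x² log x = x (x log x)` is continuous at `0` by `continuous_mul_log`.
  have := continuous_mul_log
  have := continuous_log_add_sqrt_sq_add_sq hc
  rw [h]; fun_prop

lemma continuous_segmentIntegralPrimitive {c : ℝ} (hc : 0 < c) :
    Continuous (segmentIntegralPrimitive c) := by
  have h : segmentIntegralPrimitive c = fun x ↦
      2 / 3 * c * x * √(x ^ 2 + c ^ 2) + c ^ 3 / 3 * log (x + √(x ^ 2 + c ^ 2))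
        + x ^ 3 / 3 * log (c + √(x ^ 2 + c ^ 2)) - x ^ 2 * (x * log x) / 3 := by
    ext x; rw [segmentIntegralPrimitive]; ring
  have := continuous_mul_log
  have := continuous_log_add_sqrt_sq_add_sq hc
  have : Continuous fun x ↦ log (x + √(x ^ 2 + c ^ 2)) :=
    (by fun_prop : Continuous _).log fun x ↦ by
      linarith [neg_abs_le x, add_comm (x ^ 2) (c ^ 2) ▸ abs_lt_sqrt_sq_add_sq hc.ne' x]
  rw [h]; fun_prop

lemma integral_segmentIntegral {c : ℝ} (hc : 0 < c) (a b : ℝ) :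
    ∫ x in a..b, segmentIntegral c x = segmentIntegralPrimitive c b - segmentIntegralPrimitive c a :=
  integral_eq_of_hasDerivAt_off_countable _ _ (countable_singleton 0)
    (continuous_segmentIntegralPrimitive hc).continuousOn
    (fun _ hx ↦ hasDerivAt_segmentIntegralPrimitive hc.ne' hx.2)
    ((continuous_segmentIntegral hc).intervalIntegrable _ _)

lemma segmentIntegralPrimitive_sub_neg {c x : ℝ} (hc : c ≠ 0) (hx : x ≠ 0) :
    segmentIntegralPrimitive c x - segmentIntegralPrimitive c (-x) =
      2 / 3 * (2 * c * x * √(x ^ 2 + c ^ 2) + c ^ 3 * log ((x + √(x ^ 2 + c ^ 2)) / c)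
        + x ^ 3 * log ((c + √(x ^ 2 + c ^ 2)) / x)) := by
  have h := log_neg_add_sqrt_sq_add_sq hc x
  rw [add_comm (c ^ 2)] at h
  have hxs : x + √(x ^ 2 + c ^ 2) ≠ 0 := by
    linarith [neg_abs_le x, add_comm (x ^ 2) (c ^ 2) ▸ abs_lt_sqrt_sq_add_sq hc x]
  have hcs : c + √(x ^ 2 + c ^ 2) ≠ 0 := by
    linarith [neg_abs_le c, abs_lt_sqrt_sq_add_sq hx c]
  simp only [segmentIntegralPrimitive, neg_sq, log_neg_eq_log, h, log_div hxs hc, log_div hcs hx]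
  ring

lemma setIntegral_Icc_prod_Icc {E : Type*} [NormedAddCommGroup E] [NormedSpace ℝ E]
    {f : ℝ × ℝ → E} {a₁ b₁ a₂ b₂ : ℝ} (h₁ : a₁ ≤ b₁) (h₂ : a₂ ≤ b₂)
    (hf : IntegrableOn f (Icc a₁ b₁ ×ˢ Icc a₂ b₂)) :
    ∫ q in Icc a₁ b₁ ×ˢ Icc a₂ b₂, f q = ∫ x in a₁..b₁, ∫ y in a₂..b₂, f (x, y) := by
  rw [Measure.volume_eq_prod] at hf ⊢
  simp only [setIntegral_prod f hf, integral_Icc_eq_integral_Ioc,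
    intervalIntegral.integral_of_le h₁, intervalIntegral.integral_of_le h₂]

theorem rect_mean_dist (a b : ℝ) (ha : 0 < a) (hb : 0 < b) (D : ℝ)
    (hD : D = Real.sqrt (a ^ 2 + b ^ 2)) :
    (1 / (a * b)) * ∫ q in (Set.Icc (-(a/2)) (a/2)) ×ˢ (Set.Icc (-(b/2)) (b/2)),
      Real.sqrt (q.1 ^ 2 + q.2 ^ 2)
    = (a ^ 2 / (12 * b)) * Real.log ((D + b) / a)
      - (b ^ 2 / (12 * a)) * Real.log ((D - a) / b) + D / 6 := by
  have hDsq : D ^ 2 = a ^ 2 + b ^ 2 := by rw [hD, sq_sqrt (by positivity)]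
  have hD2 : √((a / 2) ^ 2 + (b / 2) ^ 2) = D / 2 := by
    rw [show (a / 2) ^ 2 + (b / 2) ^ 2 = (a ^ 2 + b ^ 2) / 2 ^ 2 by ring,
      sqrt_div' _ (by positivity), sqrt_sq zero_le_two, hD]
  have hDa : 0 < D - a := by nlinarith [hD ▸ sqrt_nonneg (a ^ 2 + b ^ 2)]
  have hlog : log ((D + a) / b) = -log ((D - a) / b) := by
    rw [← log_inv, inv_div]
    congr 1
    rw [div_eq_div_iff hb.ne' hDa.ne']
    linear_combination hDsq
  have hrow : ∫ x in -(a / 2)..a / 2, ∫ y in -(b / 2)..b / 2, √(x ^ 2 + y ^ 2) =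
      ∫ x in -(a / 2)..a / 2, segmentIntegral (b / 2) x :=
    intervalIntegral.integral_congr_ae <|
      (volume.ae_ne 0).mono fun x hx _ ↦ integral_sqrt_sq_add_sq hx _
  rw [setIntegral_Icc_prod_Icc (by linarith) (by linarith)
      ((by fun_prop : Continuous _).continuousOn.integrableOn_compact
        (isCompact_Icc.prod isCompact_Icc)),
    hrow, integral_segmentIntegral (by positivity),
    segmentIntegralPrimitive_sub_neg (by positivity) (by positivity), hD2,
    show (a / 2 + D / 2) / (b / 2) = (D + a) / b by ring,
    show (b / 2 + D / 2) / (a / 2) = (D + b) / a by ring, hlog]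
  field_simp
  ring
end

section
/- For the quasi-static slider-pusher ODE system (ẋₛ = −(β²/(β² + c²))vₙ sin θₛ, ẏₛ = (β²/(β² + c²))vₙ cos θₛ, θ̇ₛ = (c/(β² + c²))vₙ, ċ = v_t − α(c/(β²+c²))vₙ), along any sufficiently smooth solution with vₙ > 0, the contact coordinate satisfies c = β²·(ẋₛÿₛ − ẍₛẏₛ)/(ẋₛ² + ẏₛ²)^{3/2}. -/
theorem slider_pusher_contact_flat (β b r : ℝ) (hβ : 0 < β)
    (xs ys θs c vt vn : ℝ → ℝ) (α : ℝ) (hα : α = b / 2 + r)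
    (hxs_d : Differentiable ℝ xs) (hxs_d2 : Differentiable ℝ (deriv xs))
    (hys_d : Differentiable ℝ ys) (hys_d2 : Differentiable ℝ (deriv ys))
    (hθs_d : Differentiable ℝ θs) (hc_d : Differentiable ℝ c) (hvn_d : Differentiable ℝ vn)
    (hxs : ∀ t, deriv xs t = -(β ^ 2 / (β ^ 2 + c t ^ 2)) * vn t * Real.sin (θs t))
    (hys : ∀ t, deriv ys t = (β ^ 2 / (β ^ 2 + c t ^ 2)) * vn t * Real.cos (θs t))
    (hθs : ∀ t, deriv θs t = (c t / (β ^ 2 + c t ^ 2)) * vn t)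
    (hc : ∀ t, deriv c t = vt t - α * (c t / (β ^ 2 + c t ^ 2)) * vn t)
    (t : ℝ) (hvn : 0 < vn t) :
    c t = β ^ 2 * (deriv xs t * deriv (deriv ys) t - deriv (deriv xs) t * deriv ys t)
      / Real.sqrt ((deriv xs t) ^ 2 + (deriv ys t) ^ 2) ^ 3 := by
  set K : ℝ → ℝ := fun s => β ^ 2 / (β ^ 2 + c s ^ 2) * vn s with hK
  have hden : ∀ s, β ^ 2 + c s ^ 2 ≠ 0 := fun s => by positivity
  have hKdiff : Differentiable ℝ K := by
    apply Differentiable.mul _ hvn_d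
    exact Differentiable.div (differentiable_const _)
      ((differentiable_const _).add (hc_d.pow 2)) hden
  have hxs' : deriv xs = fun s => -(K s) * Real.sin (θs s) := funext fun s => by
    rw [hxs s, hK]; ring
  have hys' : deriv ys = fun s => K s * Real.cos (θs s) := funext fun s => by
    rw [hys s, hK]
  set K' := deriv K t with hK'
  have hKt : HasDerivAt K K' t := (hKdiff t).hasDerivAt
  have hθt : HasDerivAt θs (deriv θs t) t := (hθs_d t).hasDerivAt
  have hsin : HasDerivAt (fun s => Real.sin (θs s)) (Real.cos (θs t) * deriv θs t) t :=
    (Real.hasDerivAt_sin (θs t)).comp t hθt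
  have hcos : HasDerivAt (fun s => Real.cos (θs s)) (-Real.sin (θs t) * deriv θs t) t :=
    (Real.hasDerivAt_cos (θs t)).comp t hθt
  have hddy : deriv (deriv ys) t
      = K' * Real.cos (θs t) + K t * (-Real.sin (θs t) * deriv θs t) := by
    rw [hys']
    exact (hKt.mul hcos).deriv
  have hddx : deriv (deriv xs) t
      = -K' * Real.sin (θs t) + -(K t) * (Real.cos (θs t) * deriv θs t) := by
    rw [hxs']
    exact (hKt.neg.mul hsin).deriv
  have hKpos : 0 < K t := by
    have h1 : 0 < β ^ 2 + c t ^ 2 := by positivity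
    have h2 : 0 < β ^ 2 := by positivity
    exact mul_pos (div_pos h2 h1) hvn
  have hpyth := Real.sin_sq_add_cos_sq (θs t)
  have hsum : deriv xs t ^ 2 + deriv ys t ^ 2 = K t ^ 2 := by
    simp only [hxs', hys']; nlinarith [hpyth]
  have hsqrt : Real.sqrt (deriv xs t ^ 2 + deriv ys t ^ 2) = K t := by
    rw [hsum, Real.sqrt_sq hKpos.le]
  have hnum : deriv xs t * deriv (deriv ys) t - deriv (deriv xs) t * deriv ys t
      = K t ^ 2 * deriv θs t := by
    rw [hddx, hddy]
    simp only [hxs', hys']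
    linear_combination (K t ^ 2 * deriv θs t) * hpyth
  have hKval : K t = β ^ 2 / (β ^ 2 + c t ^ 2) * vn t := rfl
  rw [hnum, hsqrt, hθs t, hKval]
  have h1 := hden t
  have h2 : vn t ≠ 0 := hvn.ne'
  have h3 : β ≠ 0 := hβ.ne'
  field_simp
end

section
/- For the quasi-static slider-pusher system with flat output ζ = (xₛ, yₛ), along any sufficiently smooth solution with vₙ > 0, the normal input satisfies vₙ = (1 + β²·(ẋₛÿₛ − ẍₛẏₛ)²/(ẋₛ² + ẏₛ²)³)·√(ẋₛ² + ẏₛ²). -/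
theorem slider_pusher_vn_flat (β b r : ℝ) (hβ : 0 < β)
    (xs ys θs c vt vn : ℝ → ℝ) (α : ℝ) (hα : α = b / 2 + r)
    (hxs_d : Differentiable ℝ xs) (hxs_d2 : Differentiable ℝ (deriv xs))
    (hys_d : Differentiable ℝ ys) (hys_d2 : Differentiable ℝ (deriv ys))
    (hθs_d : Differentiable ℝ θs) (hc_d : Differentiable ℝ c) (hvn_d : Differentiable ℝ vn)
    (hxs : ∀ t, deriv xs t = -(β ^ 2 / (β ^ 2 + c t ^ 2)) * vn t * Real.sin (θs t))
    (hys : ∀ t, deriv ys t = (β ^ 2 / (β ^ 2 + c t ^ 2)) * vn t * Real.cos (θs t))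
    (hθs : ∀ t, deriv θs t = (c t / (β ^ 2 + c t ^ 2)) * vn t)
    (hc : ∀ t, deriv c t = vt t - α * (c t / (β ^ 2 + c t ^ 2)) * vn t)
    (t : ℝ) (hvn : 0 < vn t) :
    vn t = (1 + β ^ 2 * (deriv xs t * deriv (deriv ys) t - deriv (deriv xs) t * deriv ys t) ^ 2
        / ((deriv xs t) ^ 2 + (deriv ys t) ^ 2) ^ 3)
      * Real.sqrt ((deriv xs t) ^ 2 + (deriv ys t) ^ 2) := by
  have hp : ∀ s, β ^ 2 + c s ^ 2 ≠ 0 := fun s => by positivity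
  have hpd : Differentiable ℝ (fun s => β ^ 2 + c s ^ 2) :=
    (differentiable_const _).add (hc_d.pow 2)
  have hK_d : Differentiable ℝ (fun s => β ^ 2 / (β ^ 2 + c s ^ 2)) :=
    (differentiable_const _).div hpd hp
  have hK' : HasDerivAt (fun s => β ^ 2 / (β ^ 2 + c s ^ 2))
      (deriv (fun s => β ^ 2 / (β ^ 2 + c s ^ 2)) t) t := (hK_d t).hasDerivAt
  set k' := deriv (fun s => β ^ 2 / (β ^ 2 + c s ^ 2)) t with hk'
  have hvn' : HasDerivAt vn (deriv vn t) t := (hvn_d t).hasDerivAt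
  have hθ' : HasDerivAt θs (deriv θs t) t := (hθs_d t).hasDerivAt
  have hsin : HasDerivAt (fun s => Real.sin (θs s)) (Real.cos (θs t) * deriv θs t) t :=
    (Real.hasDerivAt_sin (θs t)).comp t hθ'
  have hcos : HasDerivAt (fun s => Real.cos (θs s)) (-Real.sin (θs t) * deriv θs t) t :=
    (Real.hasDerivAt_cos (θs t)).comp t hθ'
  -- second derivative of xs
  have hFx : HasDerivAt (fun s => -(β ^ 2 / (β ^ 2 + c s ^ 2)) * vn s * Real.sin (θs s))
      ((-k' * vn t + -(β ^ 2 / (β ^ 2 + c t ^ 2)) * deriv vn t) * Real.sin (θs t)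
        + -(β ^ 2 / (β ^ 2 + c t ^ 2)) * vn t * (Real.cos (θs t) * deriv θs t)) t :=
    (hK'.neg.mul hvn').mul hsin
  have hFy : HasDerivAt (fun s => (β ^ 2 / (β ^ 2 + c s ^ 2)) * vn s * Real.cos (θs s))
      ((k' * vn t + (β ^ 2 / (β ^ 2 + c t ^ 2)) * deriv vn t) * Real.cos (θs t)
        + (β ^ 2 / (β ^ 2 + c t ^ 2)) * vn t * (-Real.sin (θs t) * deriv θs t)) t :=
    (hK'.mul hvn').mul hcos
  have hdxx : deriv (deriv xs) t = (-k' * vn t + -(β ^ 2 / (β ^ 2 + c t ^ 2)) * deriv vn t) * Real.sin (θs t)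
        + -(β ^ 2 / (β ^ 2 + c t ^ 2)) * vn t * (Real.cos (θs t) * deriv θs t) := by
    rw [show deriv xs = fun s => -(β ^ 2 / (β ^ 2 + c s ^ 2)) * vn s * Real.sin (θs s) from funext hxs]
    exact hFx.deriv
  have hdyy : deriv (deriv ys) t = (k' * vn t + (β ^ 2 / (β ^ 2 + c t ^ 2)) * deriv vn t) * Real.cos (θs t)
        + (β ^ 2 / (β ^ 2 + c t ^ 2)) * vn t * (-Real.sin (θs t) * deriv θs t) := by
    rw [show deriv ys = fun s => (β ^ 2 / (β ^ 2 + c s ^ 2)) * vn s * Real.cos (θs s) from funext hys]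
    exact hFy.deriv
  have hBpos : 0 < β ^ 2 / (β ^ 2 + c t ^ 2) * vn t := by
    apply mul_pos _ hvn
    apply div_pos (by positivity)
    positivity
  have hpyth : Real.sin (θs t) ^ 2 + Real.cos (θs t) ^ 2 = 1 := Real.sin_sq_add_cos_sq (θs t)
  have hsq : (deriv xs t) ^ 2 + (deriv ys t) ^ 2 = (β ^ 2 / (β ^ 2 + c t ^ 2) * vn t) ^ 2 := by
    rw [hxs t, hys t]
    linear_combination (β ^ 2 / (β ^ 2 + c t ^ 2) * vn t) ^ 2 * hpyth
  have hE : deriv xs t * deriv (deriv ys) t - deriv (deriv xs) t * deriv ys t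
      = (β ^ 2 / (β ^ 2 + c t ^ 2) * vn t) ^ 2 * deriv θs t := by
    rw [hxs t, hys t, hdxx, hdyy]
    linear_combination ((β ^ 2 / (β ^ 2 + c t ^ 2) * vn t) ^ 2 * deriv θs t) * hpyth
  rw [hsq, hE, Real.sqrt_sq hBpos.le, hθs t]
  have hβ2 : β ^ 2 + c t ^ 2 ≠ 0 := hp t
  have hvn0 : vn t ≠ 0 := hvn.ne'
  field_simp
end

section
/- Let ψ : [0,1] → ℝ be continuous and positive, and let v̂ : [0,T] → ℝ be continuous and positive. Then there exists a unique η > 0 and a unique strictly increasing C¹ function τ : [0,T] → [0,1] with τ(0) = 0, τ(T) = 1, satisfying τ̇(t) = ψ(τ(t))·η·v̂(t) for all t; moreover η·∫₀ᵀ v̂(t)dt = ∫₀¹ (1/ψ(σ))dσ. -/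
open intervalIntegral

theorem velocity_profile_scaling (T : ℝ) (hT : 0 < T)
    (ψ vhat : ℝ → ℝ)
    (hψc : ContinuousOn ψ (Set.Icc 0 1)) (hψpos : ∀ σ ∈ Set.Icc (0:ℝ) 1, 0 < ψ σ)
    (hvc : ContinuousOn vhat (Set.Icc 0 T)) (hvpos : ∀ t ∈ Set.Icc (0:ℝ) T, 0 < vhat t) :
    ∃ η : ℝ, 0 < η ∧ ∃ τ : ℝ → ℝ,
      (Set.MapsTo τ (Set.Icc 0 T) (Set.Icc 0 1)) ∧
      StrictMonoOn τ (Set.Icc 0 T) ∧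
      τ 0 = 0 ∧ τ T = 1 ∧
      (∀ t ∈ Set.Icc (0:ℝ) T, HasDerivAt τ (ψ (τ t) * (η * vhat t)) t) ∧
      (∀ η' : ℝ, ∀ τ' : ℝ → ℝ, 0 < η' →
        Set.MapsTo τ' (Set.Icc 0 T) (Set.Icc 0 1) →
        StrictMonoOn τ' (Set.Icc 0 T) →
        τ' 0 = 0 → τ' T = 1 →
        (∀ t ∈ Set.Icc (0:ℝ) T, HasDerivAt τ' (ψ (τ' t) * (η' * vhat t)) t) →
        η' = η ∧ ∀ t ∈ Set.Icc (0:ℝ) T, τ' t = τ t) ∧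
      η * ∫ t in (0:ℝ)..T, vhat t = ∫ σ in (0:ℝ)..1, 1 / ψ σ := by
  -- extended functions
  set ψt : ℝ → ℝ := fun x => ψ ((Set.projIcc (0:ℝ) 1 zero_le_one x) : ℝ) with hψt_def
  set vt : ℝ → ℝ := fun t => vhat ((Set.projIcc (0:ℝ) T hT.le t) : ℝ) with hvt_def
  have hψt_cont : Continuous ψt :=
    hψc.comp_continuous (continuous_subtype_val.comp continuous_projIcc)
      fun x => (Set.projIcc (0:ℝ) 1 zero_le_one x).2
  have hvt_cont : Continuous vt :=
    hvc.comp_continuous (continuous_subtype_val.comp continuous_projIcc)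
      fun x => (Set.projIcc (0:ℝ) T hT.le x).2
  have hψt_pos : ∀ x, 0 < ψt x := fun x => hψpos _ (Set.projIcc (0:ℝ) 1 zero_le_one x).2
  have hvt_pos : ∀ x, 0 < vt x := fun x => hvpos _ (Set.projIcc (0:ℝ) T hT.le x).2
  have hψt_eq : ∀ x ∈ Set.Icc (0:ℝ) 1, ψt x = ψ x := fun x hx => by
    simp [hψt_def, Set.projIcc_of_mem zero_le_one hx]
  have hvt_eq : ∀ x ∈ Set.Icc (0:ℝ) T, vt x = vhat x := fun x hx => by
    simp [hvt_def, Set.projIcc_of_mem hT.le hx]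
  have hψti_cont : Continuous (fun x => (ψt x)⁻¹) :=
    hψt_cont.inv₀ fun x => (hψt_pos x).ne'
  -- the primitives
  set F : ℝ → ℝ := fun x => ∫ s in (0:ℝ)..x, (ψt s)⁻¹ with hF_def
  set G : ℝ → ℝ := fun t => ∫ s in (0:ℝ)..t, vt s with hG_def
  have hF' : ∀ x, HasDerivAt F (ψt x)⁻¹ x := fun x =>
    intervalIntegral.integral_hasDerivAt_right (hψti_cont.intervalIntegrable _ _)
      (hψti_cont.aestronglyMeasurable.stronglyMeasurableAtFilter)
      hψti_cont.continuousAt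
  have hG' : ∀ t, HasDerivAt G (vt t) t := fun t =>
    intervalIntegral.integral_hasDerivAt_right (hvt_cont.intervalIntegrable _ _)
      (hvt_cont.aestronglyMeasurable.stronglyMeasurableAtFilter)
      hvt_cont.continuousAt
  have hF0 : F 0 = 0 := intervalIntegral.integral_same
  have hG0 : G 0 = 0 := intervalIntegral.integral_same
  have hFmono : StrictMono F :=
    strictMono_of_deriv_pos fun x => by
      rw [(hF' x).deriv]; exact inv_pos.2 (hψt_pos x)
  have hGmono : StrictMono G :=
    strictMono_of_deriv_pos fun x => by rw [(hG' x).deriv]; exact hvt_pos x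
  -- surjectivity of F
  obtain ⟨M, hM⟩ : ∃ M, ∀ x, ψt x ≤ M := by
    obtain ⟨x₀, -, hx₀⟩ :=
      (isCompact_Icc (a := (0:ℝ)) (b := 1)).exists_isMaxOn (Set.nonempty_Icc.2 zero_le_one) hψc
    exact ⟨ψ x₀, fun x => hx₀ (Set.projIcc (0:ℝ) 1 zero_le_one x).2⟩
  have hMpos : 0 < M := lt_of_lt_of_le (hψt_pos 0) (hM 0)
  have hlow : ∀ x, (M : ℝ)⁻¹ ≤ (ψt x)⁻¹ := fun x =>
    inv_anti₀ (hψt_pos x) (hM x)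
  have hFgrow : ∀ x : ℝ, 0 ≤ x → M⁻¹ * x ≤ F x := by
    intro x hx
    have h1 : ∫ s in (0:ℝ)..x, (M:ℝ)⁻¹ ≤ ∫ s in (0:ℝ)..x, (ψt s)⁻¹ :=
      intervalIntegral.integral_mono_on hx (intervalIntegrable_const)
        (hψti_cont.intervalIntegrable _ _) fun s _ => hlow s
    simpa [mul_comm] using h1
  have hFgrow' : ∀ x : ℝ, x ≤ 0 → F x ≤ M⁻¹ * x := by
    intro x hx
    have h1 : ∫ s in x..(0:ℝ), (M:ℝ)⁻¹ ≤ ∫ s in x..(0:ℝ), (ψt s)⁻¹ :=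
      intervalIntegral.integral_mono_on hx (intervalIntegrable_const)
        (hψti_cont.intervalIntegrable _ _) fun s _ => hlow s
    have h2 : (∫ s in x..(0:ℝ), (ψt s)⁻¹) = -F x := by
      rw [hF_def, intervalIntegral.integral_symm]
    rw [h2] at h1
    simp only [intervalIntegral.integral_const, smul_eq_mul] at h1
    nlinarith
  have hFsurj : Function.Surjective F := by
    apply Continuous.surjective
    · exact continuous_iff_continuousAt.2 fun x => (hF' x).continuousAt
    · exact Filter.tendsto_atTop_mono' _
        (Filter.eventually_atTop.2 ⟨0, fun x hx => hFgrow x hx⟩)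
        (Filter.Tendsto.const_mul_atTop (inv_pos.2 hMpos) Filter.tendsto_id)
    · exact Filter.tendsto_atBot_mono' _
        (Filter.eventually_atBot.2 ⟨0, fun x hx => hFgrow' x hx⟩)
        (Filter.Tendsto.const_mul_atBot (inv_pos.2 hMpos) Filter.tendsto_id)
  -- inverse of F
  set e : ℝ ≃o ℝ := StrictMono.orderIsoOfSurjective F hFmono hFsurj with he_def
  set g : ℝ → ℝ := fun y => e.symm y with hg_def
  have hFg : ∀ y, F (g y) = y := fun y =>
    StrictMono.orderIsoOfSurjective_self_symm_apply F hFmono hFsurj y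
  have hg_cont : Continuous g := e.symm.toHomeomorph.continuous
  have hg' : ∀ y, HasDerivAt g (ψt (g y)) y := by
    intro y
    have h := HasDerivAt.of_local_left_inverse hg_cont.continuousAt (hF' (g y))
      (inv_ne_zero (hψt_pos (g y)).ne') (Filter.Eventually.of_forall hFg)
    rwa [inv_inv] at h
  have hg_mono : Monotone g := e.symm.strictMono.monotone
  have hg0 : g 0 = 0 := by
    have := StrictMono.orderIsoOfSurjective_symm_apply_self F hFmono hFsurj 0
    rw [hF0] at this; exact this
  have hgF1 : g (F 1) = 1 := StrictMono.orderIsoOfSurjective_symm_apply_self F hFmono hFsurj 1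
  -- the scaling factor
  have hGTpos : 0 < G T := hG0 ▸ hGmono hT
  have hF1pos : 0 < F 1 := hF0 ▸ hFmono one_pos
  set η : ℝ := F 1 / G T with hη_def
  have hηpos : 0 < η := div_pos hF1pos hGTpos
  have hηGT : η * G T = F 1 := div_mul_cancel₀ _ hGTpos.ne'
  -- the time-path map
  set τ : ℝ → ℝ := fun t => g (η * G t) with hτ_def
  have hτ0 : τ 0 = 0 := by simp [hτ_def, hG0, hg0]
  have hτT : τ T = 1 := by rw [hτ_def]; simp only; rw [hηGT, hgF1]
  have hτmaps : Set.MapsTo τ (Set.Icc 0 T) (Set.Icc 0 1) := by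
    intro t ht
    constructor
    · have : g 0 ≤ τ t := hg_mono (by nlinarith [hGmono.monotone ht.1, hG0, hηpos.le])
      rwa [hg0] at this
    · have : τ t ≤ g (F 1) := by
        apply hg_mono
        rw [← hηGT]
        exact mul_le_mul_of_nonneg_left (hGmono.monotone ht.2) hηpos.le
      rwa [hgF1] at this
  have hτmono : StrictMono τ := fun a b hab =>
    e.symm.strictMono (by exact mul_lt_mul_of_pos_left (hGmono hab) hηpos)
  have hτ' : ∀ t, HasDerivAt τ (ψt (τ t) * (η * vt t)) t := by
    intro t
    exact (hg' (η * G t)).comp t ((hG' t).const_mul η)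
  have hτ'on : ∀ t ∈ Set.Icc (0:ℝ) T, HasDerivAt τ (ψ (τ t) * (η * vhat t)) t := by
    intro t ht
    have h := hτ' t
    rwa [hψt_eq _ (hτmaps ht), hvt_eq _ ht] at h
  refine ⟨η, hηpos, τ, hτmaps, hτmono.strictMonoOn _, hτ0, hτT, hτ'on, ?_, ?_⟩
  · -- uniqueness
    intro η' τ' hη'pos hmaps' hmono' h0' hT' hd'
    -- F ∘ τ' - η' * G has zero derivative on [0,T]
    have key : ∀ t ∈ Set.Icc (0:ℝ) T, F (τ' t) = η' * G t := by
      have hderiv : ∀ t ∈ Set.Icc (0:ℝ) T,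
          HasDerivAt (fun s => F (τ' s) - η' * G s) 0 t := by
        intro t ht
        have h1 : HasDerivAt (fun s => F (τ' s))
            ((ψt (τ' t))⁻¹ * (ψ (τ' t) * (η' * vhat t))) t :=
          (hF' (τ' t)).comp t (hd' t ht)
        have h2 : HasDerivAt (fun s => η' * G s) (η' * vt t) t := (hG' t).const_mul η'
        have h3 := h1.sub h2
        have heq : (ψt (τ' t))⁻¹ * (ψ (τ' t) * (η' * vhat t)) - η' * vt t = 0 := by
          rw [hψt_eq _ (hmaps' ht), hvt_eq _ ht, ← mul_assoc,
            inv_mul_cancel₀ (hψpos _ (hmaps' ht)).ne', one_mul, sub_self]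
        rwa [heq] at h3
      intro t ht
      have hconst := constant_of_has_deriv_right_zero
        (f := fun s => F (τ' s) - η' * G s) (a := 0) (b := T)
        (fun s hs => ((hderiv s hs).continuousAt).continuousWithinAt)
        (fun s hs => ((hderiv s (Set.mem_Icc_of_Ico hs)).hasDerivWithinAt))
      have := hconst t ht
      simp only [h0', hF0, hG0, mul_zero, sub_zero] at this
      linarith [this]
    have hη'η : η' = η := by
      have hTmem : T ∈ Set.Icc (0:ℝ) T := ⟨hT.le, le_refl T⟩
      have := key T hTmem
      rw [hT'] at this
      rw [hη_def, eq_div_iff hGTpos.ne']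
      linarith
    refine ⟨hη'η, fun t ht => ?_⟩
    have h1 : F (τ' t) = η * G t := hη'η ▸ key t ht
    have h2 : F (τ t) = η * G t := hFg (η * G t)
    exact hFmono.injective (h1.trans h2.symm)
  · -- the integral identity
    have h1 : (∫ t in (0:ℝ)..T, vhat t) = G T := by
      rw [hG_def]
      exact intervalIntegral.integral_congr fun x hx =>
        (hvt_eq x (by rwa [Set.uIcc_of_le hT.le] at hx)).symm
    have h2 : (∫ σ in (0:ℝ)..1, 1 / ψ σ) = F 1 := by
      rw [hF_def]
      refine intervalIntegral.integral_congr fun x hx => ?_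
      rw [Set.uIcc_of_le zero_le_one] at hx
      rw [one_div, hψt_eq x hx]
    rw [h1, h2, hηGT]
end

section
/- Let x, y be twice differentiable functions of τ and τ(t) a twice differentiable reparametrization. For the gantry-crane flat expression θ = arctan(ẍ/(g − ÿ)) with g a constant, the value of θ at time t depends on τ̈(t) (not only on τ̇(t) and the geometric derivatives): specifically, ẍ = x'τ̈ + x''τ̇² and ÿ = y'τ̈ + y''τ̇², and there exist smooth paths (x, y) and reparametrizations τ₁, τ₂ with τ₁(t₀) = τ₂(t₀), τ̇₁(t₀) = τ̇₂(t₀) but τ̈₁(t₀) ≠ τ̈₂(t₀) such that the resulting values of arctan(ẍ/(g−ÿ)) at t₀ differ. -/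
private lemma aux_d1 : deriv (deriv (fun t : ℝ => t)) = fun _ : ℝ => 0 := by
  simp [deriv_id'']

private lemma aux_d2 : deriv (deriv (fun t : ℝ => t + t ^ 2)) = fun _ : ℝ => 2 := by
  have h : deriv (fun t : ℝ => t + t ^ 2) = fun t : ℝ => 1 + 2 * t := by
    funext t
    simp [deriv_add, deriv_pow]
  rw [h]
  funext t
  have : HasDerivAt (fun t : ℝ => 1 + 2 * t) 2 t := by
    simpa using ((hasDerivAt_id t).const_mul 2).const_add 1
  simpa using this.deriv

theorem gantry_crane_not_invariant (g : ℝ) (hg : 0 < g) :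
    ∃ (x y τ₁ τ₂ : ℝ → ℝ) (t₀ : ℝ),
      ContDiff ℝ (⊤ : ℕ∞) x ∧ ContDiff ℝ (⊤ : ℕ∞) y ∧ ContDiff ℝ (⊤ : ℕ∞) τ₁ ∧ ContDiff ℝ (⊤ : ℕ∞) τ₂ ∧
      τ₁ t₀ = τ₂ t₀ ∧
      deriv τ₁ t₀ = deriv τ₂ t₀ ∧
      deriv (deriv τ₁) t₀ ≠ deriv (deriv τ₂) t₀ ∧
      Real.arctan (deriv (deriv (fun t => x (τ₁ t))) t₀
          / (g - deriv (deriv (fun t => y (τ₁ t))) t₀))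
        ≠ Real.arctan (deriv (deriv (fun t => x (τ₂ t))) t₀
          / (g - deriv (deriv (fun t => y (τ₂ t))) t₀)) := by
  refine ⟨id, fun _ => 0, id, fun t => t + t ^ 2, 0, contDiff_id, contDiff_const,
    contDiff_id, by fun_prop, by simp, ?_, ?_, ?_⟩
  · have h : deriv (id : ℝ → ℝ) = fun _ : ℝ => 1 := by simp [deriv_id'']
    have h2 : deriv (fun t : ℝ => t + t ^ 2) = fun t : ℝ => 1 + 2 * t := by
      funext t
      simp [deriv_add, deriv_pow]
    rw [h, h2]
    norm_num
  · have h1 : deriv (deriv (id : ℝ → ℝ)) = fun _ : ℝ => 0 := by simp [deriv_id'']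
    rw [h1, aux_d2]
    norm_num
  · simp only [id_eq]
    rw [aux_d1, aux_d2]
    simp only [Pi.zero_apply]
    have hy : deriv (deriv (fun _ : ℝ => (0:ℝ))) = fun _ : ℝ => 0 := by simp
    rw [hy]
    simp only [Pi.zero_apply, sub_zero]
    intro hc
    have h := Real.arctan_injective hc
    rw [zero_div] at h
    have h2 : (0:ℝ) < 2 / g := by positivity
    rw [← h] at h2
    exact lt_irrefl 0 h2
end
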